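/- arXiv:2008.10183 — 3 statements merged into one kernel-verified Lean document; each statement's English description precedes it below -/
import Mathlib

section
/- Let n, p ∈ ℕ and let X be an n×p real matrix such that xᵀ(XᵀX)x ≥ ν‖x‖² for all x ∈ ℝᵖ, where ν > 0 (i.e., X has full column rank with smallest singular value at least √ν). Let ξ > 0 and let w, λ : Fin p → ℝ with w_k ≠ 0 and λ_k ≠ 0 for all k, and let s_k ∈ {−1, 1} for each k. Define the diagonal matrices A with A_kk = 6ξ|w_k|/λ_k⁴ and B with B_kk = s_k · 2ξ/λ_k³. If for every k the Schur-complement eigenvalue ρ_k := (2ξ/λ_k³)² · λ_k⁴/(6ξ|w_k|) = 2ξ/(3|w_k|λ_k²) satisfies ρ_k ≤ ν, then the symmetric block matrix H = [[A, B], [B, XᵀX]] is positive semidefinite. -/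
/-!
Since `A` is a positive diagonal matrix, `H ⪰ 0` is equivalent to its Schur complement
`XᵀX - B A⁻¹ B = XᵀX - diag(ρ_k)` being positive semidefinite, where `ρ_k = b_k² / a_k`.
That matrix dominates `XᵀX - ν I ⪰ 0` because every `ρ_k ≤ ν`.
-/

open Matrix

theorem posSemidef_fromBlocks_diagonal_iff {m : Type*} [Fintype m] [DecidableEq m]
    {a : m → ℝ} (ha : ∀ k, 0 < a k) (b : m → ℝ) (D : Matrix m m ℝ) :
    (fromBlocks (diagonal a) (diagonal b) (diagonal b) D).PosSemidef ↔
      (D - diagonal fun k => b k ^ 2 / a k).PosSemidef := by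
  have hA : (diagonal a).PosDef := posDef_diagonal_iff.mpr ha
  let _ := hA.isUnit.invertible
  have hB : (diagonal b)ᴴ = diagonal b := by simp
  have hinv : (diagonal a)⁻¹ = diagonal a⁻¹ :=
    inv_eq_left_inv <| by simp [diagonal_mul_diagonal, fun k => (ha k).ne', ← diagonal_one]
  have hSchur := PosDef.fromBlocks₁₁ (diagonal b) D hA
  rw [hB, hinv, diagonal_mul_diagonal, diagonal_mul_diagonal] at hSchur
  rw [hSchur]
  congr! 4 with k
  simp only [Pi.inv_apply]
  ring

theorem posSemidef_sub_diagonal_of_le {m : Type*} [Fintype m] [DecidableEq m]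
    {M : Matrix m m ℝ} (hM : M.IsHermitian) {ν : ℝ}
    (hν : ∀ x : m → ℝ, ν * (x ⬝ᵥ x) ≤ x ⬝ᵥ (M *ᵥ x)) {d : m → ℝ} (hd : ∀ k, d k ≤ ν) :
    (M - diagonal d).PosSemidef := by
  refine .of_dotProduct_mulVec_nonneg (hM.sub (isHermitian_diagonal d)) fun x => ?_
  have hdiag : x ⬝ᵥ (diagonal d *ᵥ x) ≤ ν * (x ⬝ᵥ x) := by
    simp only [mulVec_diagonal, dotProduct, Finset.mul_sum]
    exact Finset.sum_le_sum fun k _ => by nlinarith [hd k, mul_self_nonneg (x k)]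
  rw [star_trivial, sub_mulVec, dotProduct_sub, sub_nonneg]
  exact hdiag.trans (hν x)

theorem halo_hessian_posSemidef_general
    {n p : ℕ} (X : Matrix (Fin n) (Fin p) ℝ) (ν : ℝ)
    (hX : ∀ x : Fin p → ℝ, ν * (x ⬝ᵥ x) ≤ x ⬝ᵥ ((Xᵀ * X) *ᵥ x))
    (ξ : ℝ) (hξ : 0 < ξ) (w lam : Fin p → ℝ)
    (hw : ∀ k, w k ≠ 0) (hlam : ∀ k, lam k ≠ 0)
    (s : Fin p → ℝ) (hs : ∀ k, s k = -1 ∨ s k = 1)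
    (A B : Matrix (Fin p) (Fin p) ℝ)
    (hA : A = Matrix.diagonal (fun k => 6 * ξ * |w k| / (lam k) ^ 4))
    (hB : B = Matrix.diagonal (fun k => s k * (2 * ξ) / (lam k) ^ 3))
    (hρ : ∀ k, 2 * ξ / (3 * |w k| * (lam k) ^ 2) ≤ ν) :
    (Matrix.fromBlocks A B B (Xᵀ * X)).PosSemidef := by
  subst hA hB
  have hApos (k : Fin p) : 0 < 6 * ξ * |w k| / lam k ^ 4 := by
    have := hw k
    have := hlam k
    positivity
  have hρ_eq (k : Fin p) :
      (s k * (2 * ξ) / lam k ^ 3) ^ 2 / (6 * ξ * |w k| / lam k ^ 4) =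
        2 * ξ / (3 * |w k| * lam k ^ 2) := by
    have hs2 : s k ^ 2 = 1 := by rcases hs k with h | h <;> simp [h]
    have := abs_pos.mpr (hw k)
    have := hlam k
    field_simp
    rw [hs2]
    ring
  rw [posSemidef_fromBlocks_diagonal_iff hApos]
  exact posSemidef_sub_diagonal_of_le (isHermitian_conjTranspose_mul_self X) hX
    fun k => (hρ_eq k).trans_le (hρ k)

/-- If `XᵀX ⪰ ν·I` (ν > 0) and the Schur-complement eigenvalues
`ρ_k = 2ξ/(3|w_k|λ_k²)` all satisfy `ρ_k ≤ ν`, then the HALO Hessian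
`H = [[A, B], [B, XᵀX]]` with `A = diag(6ξ|w_k|/λ_k⁴)` and
`B = diag(s_k · 2ξ/λ_k³)` is positive semidefinite. -/
theorem halo_hessian_posSemidef
    {n p : ℕ} (X : Matrix (Fin n) (Fin p) ℝ) (ν : ℝ) (hν : 0 < ν)
    (hX : ∀ x : Fin p → ℝ, ν * (x ⬝ᵥ x) ≤ x ⬝ᵥ ((Xᵀ * X) *ᵥ x))
    (ξ : ℝ) (hξ : 0 < ξ) (w lam : Fin p → ℝ)
    (hw : ∀ k, w k ≠ 0) (hlam : ∀ k, lam k ≠ 0)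
    (s : Fin p → ℝ) (hs : ∀ k, s k = -1 ∨ s k = 1)
    (A B : Matrix (Fin p) (Fin p) ℝ)
    (hA : A = Matrix.diagonal (fun k => 6 * ξ * |w k| / (lam k) ^ 4))
    (hB : B = Matrix.diagonal (fun k => s k * (2 * ξ) / (lam k) ^ 3))
    (hρ : ∀ k, 2 * ξ / (3 * |w k| * (lam k) ^ 2) ≤ ν) :
    (Matrix.fromBlocks A B B (Xᵀ * X)).PosSemidef :=
  halo_hessian_posSemidef_general X ν hX ξ hξ w lam hw hlam s hs A B hA hB hρ
end

section
/- Under the hypotheses of the previous statement, if the strict inequality ρ_k = 2ξ/(3|w_k|λ_k²) < ν holds for every k, then the symmetric block matrix H = [[A, B], [B, XᵀX]], with A = diag(6ξ|w_k|/λ_k⁴) and B = diag(s_k · 2ξ/λ_k³), is positive definite. -/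
/-! The block `A` is a positive diagonal matrix and `B_k² / A_k = ρ_k`, so the Schur complement
`XᵀX - B A⁻¹ B` is `XᵀX - diag ρ`. Since `XᵀX ⪰ ν` and `ρ_k < ν`, this complement is positive
definite, and a Hermitian block matrix whose corner and Schur complement are both positive
definite is itself positive definite. -/

open Matrix

namespace Matrix

variable {m n R : Type*} [Fintype m] [Fintype n]

theorem PosDef.posDef_fromBlocks₁₁
    [CommRing R] [PartialOrder R] [StarRing R] [StarOrderedRing R] [DecidableEq m]
    {A : Matrix m m R} (B : Matrix m n R) (D : Matrix n n R) (hA : A.PosDef)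
    [Invertible A] (hS : (D - Bᴴ * A⁻¹ * B).PosDef) : (fromBlocks A B Bᴴ D).PosDef := by
  refine .of_dotProduct_mulVec_pos ((IsHermitian.fromBlocks₁₁ B D hA.1).2 hS.1) fun x hx => ?_
  rw [dotProduct_mulVec, ← Sum.elim_comp_inl_inr x, schur_complement_eq₁₁ B D _ _ hA.1]
  simp only [← dotProduct_mulVec]
  by_cases hv : x ∘ Sum.inr = 0
  · have hu : x ∘ Sum.inl ≠ 0 := fun hu => hx <| by
      rw [← Sum.elim_comp_inl_inr x, hu, hv, Sum.elim_zero_zero]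
    simpa [hv] using hA.dotProduct_mulVec_pos hu
  · exact add_pos_of_nonneg_of_pos (hA.posSemidef.dotProduct_mulVec_nonneg _)
      (hS.dotProduct_mulVec_pos hv)

theorem posDef_sub_diagonal [DecidableEq n] {C : Matrix n n ℝ} {ν : ℝ} {ρ : n → ℝ}
    (hC : C.IsHermitian) (hCν : ∀ x : n → ℝ, ν * (x ⬝ᵥ x) ≤ x ⬝ᵥ (C *ᵥ x))
    (hρ : ∀ k, ρ k < ν) : (C - diagonal ρ).PosDef := by
  have hsplit :
      C - diagonal ρ = (C - diagonal fun _ => ν) + diagonal (fun k => ν - ρ k) := by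
    rw [← diagonal_sub]
    abel
  have hshift : (C - diagonal fun _ => ν).PosSemidef :=
    .of_dotProduct_mulVec_nonneg (hC.sub (isHermitian_diagonal _)) fun x => by
      have hνx : (diagonal fun _ => ν) *ᵥ x = ν • x := by ext; simp [mulVec_diagonal]
      rw [star_trivial, sub_mulVec, dotProduct_sub, hνx, dotProduct_smul, smul_eq_mul]
      linarith [hCν x]
  rw [hsplit]
  exact PosDef.posSemidef_add hshift (posDef_diagonal_iff.2 fun k => sub_pos.2 (hρ k))

theorem posDef_fromBlocks_diagonal [DecidableEq n] {a b : n → ℝ} {C : Matrix n n ℝ} {ν : ℝ}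
    (ha : ∀ k, 0 < a k) (hC : C.IsHermitian)
    (hCν : ∀ x : n → ℝ, ν * (x ⬝ᵥ x) ≤ x ⬝ᵥ (C *ᵥ x)) (hab : ∀ k, b k ^ 2 / a k < ν) :
    (fromBlocks (diagonal a) (diagonal b) (diagonal b) C).PosDef := by
  have hA : (diagonal a).PosDef := posDef_diagonal_iff.2 ha
  have := hA.isUnit.invertible
  have hB : (diagonal b)ᴴ = diagonal b := by simp
  have hS : C - (diagonal b)ᴴ * (diagonal a)⁻¹ * diagonal b
      = C - diagonal (fun k => b k ^ 2 / a k) := by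
    have hAinv : (diagonal a)⁻¹ = diagonal a⁻¹ := inv_eq_left_inv <| by
      rw [diagonal_mul_diagonal, ← diagonal_one]
      exact congrArg diagonal (funext fun k => inv_mul_cancel₀ (ha k).ne')
    rw [hB, hAinv, diagonal_mul_diagonal, diagonal_mul_diagonal]
    congr 2
    ext k
    simp only [Pi.inv_apply]
    ring
  simpa [hB] using
    hA.posDef_fromBlocks₁₁ (diagonal b) C (hS ▸ posDef_sub_diagonal hC hCν hab)

end Matrix

theorem halo_hessian_posDef_general
    {n p : ℕ} (X : Matrix (Fin n) (Fin p) ℝ) (ν : ℝ)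
    (hX : ∀ x : Fin p → ℝ, ν * (x ⬝ᵥ x) ≤ x ⬝ᵥ ((Xᵀ * X) *ᵥ x))
    (ξ : ℝ) (hξ : 0 < ξ) (w lam : Fin p → ℝ)
    (hw : ∀ k, w k ≠ 0) (hlam : ∀ k, lam k ≠ 0)
    (s : Fin p → ℝ) (hs : ∀ k, s k = -1 ∨ s k = 1)
    (A B : Matrix (Fin p) (Fin p) ℝ)
    (hA : A = Matrix.diagonal (fun k => 6 * ξ * |w k| / (lam k) ^ 4))
    (hB : B = Matrix.diagonal (fun k => s k * (2 * ξ) / (lam k) ^ 3))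
    (hρ : ∀ k, 2 * ξ / (3 * |w k| * (lam k) ^ 2) < ν) :
    (Matrix.fromBlocks A B B (Xᵀ * X)).PosDef := by
  have hratio : ∀ k, (s k * (2 * ξ) / lam k ^ 3) ^ 2 / (6 * ξ * |w k| / lam k ^ 4)
      = 2 * ξ / (3 * |w k| * lam k ^ 2) := fun k => by
    have hs2 : s k ^ 2 = 1 := by rcases hs k with h | h <;> simp [h]
    have := hw k
    have := hlam k
    field_simp
    rw [hs2]
    ring
  have hXX : (Xᵀ * X).IsHermitian := by simpa using isHermitian_conjTranspose_mul_self X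
  subst hA hB
  refine posDef_fromBlocks_diagonal (fun k => ?_) hXX hX fun k => hratio k ▸ hρ k
  have := hw k
  have := hlam k
  positivity

/-- If `XᵀX ⪰ ν·I` (ν > 0) and the Schur-complement eigenvalues
`ρ_k = 2ξ/(3|w_k|λ_k²)` all satisfy the strict bound `ρ_k < ν`, then the HALO
Hessian `H = [[A, B], [B, XᵀX]]` with `A = diag(6ξ|w_k|/λ_k⁴)` and
`B = diag(s_k · 2ξ/λ_k³)` is positive definite. -/
theorem halo_hessian_posDef
    {n p : ℕ} (X : Matrix (Fin n) (Fin p) ℝ) (ν : ℝ) (hν : 0 < ν)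
    (hX : ∀ x : Fin p → ℝ, ν * (x ⬝ᵥ x) ≤ x ⬝ᵥ ((Xᵀ * X) *ᵥ x))
    (ξ : ℝ) (hξ : 0 < ξ) (w lam : Fin p → ℝ)
    (hw : ∀ k, w k ≠ 0) (hlam : ∀ k, lam k ≠ 0)
    (s : Fin p → ℝ) (hs : ∀ k, s k = -1 ∨ s k = 1)
    (A B : Matrix (Fin p) (Fin p) ℝ)
    (hA : A = Matrix.diagonal (fun k => 6 * ξ * |w k| / (lam k) ^ 4))
    (hB : B = Matrix.diagonal (fun k => s k * (2 * ξ) / (lam k) ^ 3))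
    (hρ : ∀ k, 2 * ξ / (3 * |w k| * (lam k) ^ 2) < ν) :
    (Matrix.fromBlocks A B B (Xᵀ * X)).PosDef :=
  halo_hessian_posDef_general X ν hX ξ hξ w lam hw hlam s hs A B hA hB hρ
end

section
/- Let n, p ∈ ℕ, X an n×p real matrix with xᵀ(XᵀX)x ≥ ν‖x‖² for all x ∈ ℝᵖ for some ν > 0, y ∈ ℝⁿ, and ξ > 0. Let S ⊆ ℝᵖ × ℝᵖ be an open convex set such that every (w, λ) ∈ S satisfies w_k > 0, λ_k > 0, and 2ξ ≤ 3ν w_k λ_k² for all k. Then the function f(w, λ) = ½‖y − Xw‖² + ξ Σ_k w_k/λ_k² is convex on S. -/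
/-!
Since `XᵀX ⪰ νI`, the loss splits as the convex quadratic `½‖y - Xw‖² - (ν/2)‖w‖²` plus the sum
over `k` of `(ν/2) w_k² + ξ w_k / λ_k²`, each term depending on the single pair `(w_k, λ_k)`.
Along a line with direction `(s, r)`, the second derivative of such a term is
`(ν λ⁴ s² - 4 ξ λ s r + 6 ξ w r²) / λ⁴`, and this quadratic form in `(s, r)` is positive
semidefinite exactly when `2ξ ≤ 3ν w λ²`.
-/

open Matrix Set

section Convexity

variable {𝕜 E β : Type*} [Field 𝕜] [LinearOrder 𝕜] [AddCommGroup E] [Module 𝕜 E]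

theorem convexOn_sum [AddCommMonoid β] [PartialOrder β] [IsOrderedAddMonoid β] [Module 𝕜 β]
    {ι : Type*} {s : Set E} (hs : Convex 𝕜 s) {t : Finset ι} {f : ι → E → β}
    (hf : ∀ i ∈ t, ConvexOn 𝕜 s (f i)) : ConvexOn 𝕜 s fun x => ∑ i ∈ t, f i x := by
  classical
  induction t using Finset.induction_on with
  | empty => simpa using convexOn_const 0 hs
  | insert i t hi ih =>
    simp only [Finset.sum_insert hi]
    exact (hf i (t.mem_insert_self i)).add (ih fun j hj => hf j (Finset.mem_insert_of_mem hj))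

variable [IsStrictOrderedRing 𝕜]

theorem convexOn_of_convexOn_Icc_segment [AddCommMonoid β] [PartialOrder β] [Module 𝕜 β]
    {s : Set E} (hs : Convex 𝕜 s) {f : E → β}
    (hf : ∀ u ∈ s, ∀ v ∈ s, ConvexOn 𝕜 (Icc (0 : 𝕜) 1) fun θ => f (u + θ • (v - u))) :
    ConvexOn 𝕜 s f := by
  refine ⟨hs, fun u hu v hv a b ha hb hab => ?_⟩
  have h := (hf u hu v hv).2 (left_mem_Icc.2 zero_le_one) (right_mem_Icc.2 zero_le_one) ha hb hab
  have hseg : u + b • (v - u) = a • u + b • v := by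
    rw [eq_sub_of_add_eq hab]
    module
  simpa [hseg] using h

theorem LinearMap.BilinForm.convexOn_univ_apply_self (B : LinearMap.BilinForm 𝕜 E)
    (hB : ∀ x, 0 ≤ B x x) : ConvexOn 𝕜 univ fun x => B x x := by
  refine ⟨convex_univ, fun u _ v _ a b ha hb hab => ?_⟩
  have hgap : a • B u u + b • B v v - B (a • u + b • v) (a • u + b • v)
      = a * b * B (u - v) (u - v) := by
    simp only [map_add, map_sub, map_smul, LinearMap.add_apply, LinearMap.sub_apply,
      LinearMap.smul_apply, smul_eq_mul]
    rw [eq_sub_of_add_eq hab]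
    ring
  have := mul_nonneg (mul_nonneg ha hb) (hB (u - v))
  linarith

end Convexity

noncomputable def haloCoordTerm (ν ξ : ℝ) (q : ℝ × ℝ) : ℝ := ν / 2 * q.1 ^ 2 + ξ * (q.1 / q.2 ^ 2)

section HaloCoordTerm

variable {ν ξ : ℝ}

theorem hasDerivAt_haloCoordTerm_line (a b s r : ℝ) {θ : ℝ} (hθ : b + θ * r ≠ 0) :
    HasDerivAt (fun t => haloCoordTerm ν ξ (a + t * s, b + t * r))
      (ν * (a + θ * s) * s + ξ * ((s * (b + θ * r) - 2 * r * (a + θ * s)) / (b + θ * r) ^ 3))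
      θ := by
  have hw : HasDerivAt (fun t => a + t * s) s θ := (hasDerivAt_mul_const s).const_add a
  have hl : HasDerivAt (fun t => b + t * r) r θ := (hasDerivAt_mul_const r).const_add b
  refine (((hw.fun_pow 2).const_mul (ν / 2)).fun_add
    ((hw.fun_div (hl.fun_pow 2) (pow_ne_zero 2 hθ)).const_mul ξ)).congr_deriv ?_
  field_simp
  ring

theorem hasDerivAt_deriv_haloCoordTerm_line (a b s r : ℝ) {θ : ℝ} (hθ : b + θ * r ≠ 0) :
    HasDerivAt
      (fun t => ν * (a + t * s) * s +
        ξ * ((s * (b + t * r) - 2 * r * (a + t * s)) / (b + t * r) ^ 3))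
      (ν * s ^ 2 + ξ * ((6 * r ^ 2 * (a + θ * s) - 4 * s * r * (b + θ * r)) / (b + θ * r) ^ 4))
      θ := by
  have hw : HasDerivAt (fun t => a + t * s) s θ := (hasDerivAt_mul_const s).const_add a
  have hl : HasDerivAt (fun t => b + t * r) r θ := (hasDerivAt_mul_const r).const_add b
  refine (((hw.const_mul ν).mul_const s).fun_add
    ((((hl.const_mul s).fun_sub (hw.const_mul (2 * r))).fun_div (hl.fun_pow 3)
      (pow_ne_zero 3 hθ)).const_mul ξ)).congr_deriv ?_
  norm_num
  field_simp
  ring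

theorem haloCoordTerm_deriv2_nonneg (hν : 0 < ν) (hξ : 0 ≤ ξ) {w l : ℝ} (hl : l ≠ 0)
    (hwl : 2 * ξ ≤ 3 * ν * w * l ^ 2) (s r : ℝ) :
    0 ≤ ν * s ^ 2 + ξ * ((6 * r ^ 2 * w - 4 * s * r * l) / l ^ 4) := by
  have hl4 : 0 < l ^ 4 := by positivity
  have hsq : ν * l ^ 4 * (ν * s ^ 2 * l ^ 4 - 4 * ξ * s * r * l + 6 * ξ * r ^ 2 * w)
      = (ν * l ^ 4 * s - 2 * ξ * l * r) ^ 2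
        + 2 * ξ * l ^ 2 * r ^ 2 * (3 * ν * w * l ^ 2 - 2 * ξ) := by
    ring
  have hform : 0 ≤ ν * s ^ 2 * l ^ 4 - 4 * ξ * s * r * l + 6 * ξ * r ^ 2 * w := by
    refine nonneg_of_mul_nonneg_right ?_ (mul_pos hν hl4)
    rw [hsq]
    exact add_nonneg (sq_nonneg _) (mul_nonneg (by positivity) (sub_nonneg.2 hwl))
  calc 0 ≤ (ν * s ^ 2 * l ^ 4 - 4 * ξ * s * r * l + 6 * ξ * r ^ 2 * w) / l ^ 4 :=
        div_nonneg hform hl4.le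
    _ = ν * s ^ 2 + ξ * ((6 * r ^ 2 * w - 4 * s * r * l) / l ^ 4) := by
        field_simp
        ring

theorem convexOn_haloCoordTerm_line (hν : 0 < ν) (hξ : 0 ≤ ξ) {D : Set ℝ} (hD : Convex ℝ D)
    (a b s r : ℝ)
    (hreg : ∀ θ ∈ D, b + θ * r ≠ 0 ∧ 2 * ξ ≤ 3 * ν * (a + θ * s) * (b + θ * r) ^ 2) :
    ConvexOn ℝ D fun θ => haloCoordTerm ν ξ (a + θ * s, b + θ * r) := by
  refine convexOn_of_hasDerivWithinAt2_nonneg hD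
    (fun θ hθ => (hasDerivAt_haloCoordTerm_line a b s r (hreg θ hθ).1).continuousAt
      |>.continuousWithinAt)
    (fun θ hθ => (hasDerivAt_haloCoordTerm_line a b s r
      (hreg θ (interior_subset hθ)).1).hasDerivWithinAt)
    (fun θ hθ => (hasDerivAt_deriv_haloCoordTerm_line a b s r
      (hreg θ (interior_subset hθ)).1).hasDerivWithinAt)
    fun θ hθ => ?_
  obtain ⟨hl, hwl⟩ := hreg θ (interior_subset hθ)
  exact haloCoordTerm_deriv2_nonneg hν hξ hl hwl s r

theorem convexOn_haloCoordTerm (hν : 0 < ν) (hξ : 0 ≤ ξ) {C : Set (ℝ × ℝ)} (hC : Convex ℝ C)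
    (hreg : ∀ q ∈ C, q.2 ≠ 0 ∧ 2 * ξ ≤ 3 * ν * q.1 * q.2 ^ 2) :
    ConvexOn ℝ C (haloCoordTerm ν ξ) :=
  convexOn_of_convexOn_Icc_segment hC fun u hu v hv =>
    convexOn_haloCoordTerm_line hν hξ (convex_Icc 0 1) u.1 u.2 (v.1 - u.1) (v.2 - u.2)
      fun _ hθ => hreg _ (hC.add_smul_sub_mem hu hv hθ)

theorem convexOn_haloCoordTerm_apply (hν : 0 < ν) (hξ : 0 ≤ ξ) {ι : Type*}
    {S : Set ((ι → ℝ) × (ι → ℝ))} (hS : Convex ℝ S) (k : ι)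
    (hreg : ∀ q ∈ S, q.2 k ≠ 0 ∧ 2 * ξ ≤ 3 * ν * q.1 k * q.2 k ^ 2) :
    ConvexOn ℝ S fun q => haloCoordTerm ν ξ (q.1 k, q.2 k) := by
  let π : (ι → ℝ) × (ι → ℝ) →ₗ[ℝ] ℝ × ℝ :=
    (LinearMap.proj k ∘ₗ LinearMap.fst ℝ _ _).prod (LinearMap.proj k ∘ₗ LinearMap.snd ℝ _ _)
  have hC : ConvexOn ℝ (π '' S) (haloCoordTerm ν ξ) := by
    refine convexOn_haloCoordTerm hν hξ (hS.linear_image π) ?_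
    rintro _ ⟨q, hq, rfl⟩
    exact hreg q hq
  exact (hC.comp_linearMap π).subset (subset_preimage_image π S) hS

end HaloCoordTerm

theorem halo_loss_eq_quadratic_add_sum {m ι : Type*} [Fintype m] [Fintype ι] [DecidableEq ι]
    (X : Matrix m ι ℝ) (ν ξ : ℝ) (y : m → ℝ) (w l : ι → ℝ) :
    (1 / 2) * ((y - X *ᵥ w) ⬝ᵥ (y - X *ᵥ w)) + ξ * ∑ k, w k / l k ^ 2 =
      ((1 / 2 : ℝ) • toBilin' (Xᵀ * X - ν • 1) w w + dotProductBilin ℝ ℝ (-(y ᵥ* X)) w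
        + (1 / 2) * (y ⬝ᵥ y)) + ∑ k, haloCoordTerm ν ξ (w k, l k) := by
  have hXX : w ⬝ᵥ (Xᵀ * X) *ᵥ w = X *ᵥ w ⬝ᵥ X *ᵥ w := by
    rw [← mulVec_mulVec, dotProduct_mulVec, vecMul_transpose]
  have hsum : ν / 2 * (w ⬝ᵥ w) + ξ * ∑ k, w k / l k ^ 2 = ∑ k, haloCoordTerm ν ξ (w k, l k) := by
    simp only [haloCoordTerm, dotProduct, Finset.sum_add_distrib, Finset.mul_sum, sq]
  rw [← hsum, toBilin'_apply', sub_mulVec, dotProduct_sub w, hXX, smul_mulVec, one_mulVec,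
    dotProduct_smul, dotProductBilin_apply_apply, neg_dotProduct, ← dotProduct_mulVec]
  simp only [sub_dotProduct, dotProduct_sub, dotProduct_comm (X *ᵥ w) y, smul_eq_mul]
  ring

theorem halo_loss_convexOn_general
    {n p : ℕ} (X : Matrix (Fin n) (Fin p) ℝ) (ν : ℝ) (hν : 0 < ν)
    (hX : ∀ x : Fin p → ℝ, ν * (x ⬝ᵥ x) ≤ x ⬝ᵥ ((Xᵀ * X) *ᵥ x))
    (y : Fin n → ℝ) (ξ : ℝ) (hξ : 0 < ξ)
    (S : Set ((Fin p → ℝ) × (Fin p → ℝ)))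
    (hSconv : Convex ℝ S)
    (hS : ∀ q ∈ S, ∀ k,
      0 < q.1 k ∧ 0 < q.2 k ∧ 2 * ξ ≤ 3 * ν * q.1 k * (q.2 k) ^ 2) :
    ConvexOn ℝ S (fun q : (Fin p → ℝ) × (Fin p → ℝ) =>
      (1 / 2) * ((y - X *ᵥ q.1) ⬝ᵥ (y - X *ᵥ q.1)) +
        ξ * ∑ k, q.1 k / (q.2 k) ^ 2) := by
  set B := toBilin' (Xᵀ * X - ν • 1)
  have hB : ∀ x, 0 ≤ B x x := fun x => by
    rw [toBilin'_apply', sub_mulVec, dotProduct_sub, smul_mulVec, one_mulVec, dotProduct_smul,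
      smul_eq_mul, sub_nonneg]
    exact hX x
  have hquad : ConvexOn ℝ S fun q => (1 / 2 : ℝ) • B q.1 q.1
      + dotProductBilin ℝ ℝ (-(y ᵥ* X)) q.1 + (1 / 2) * (y ⬝ᵥ y) :=
    ((((B.convexOn_univ_apply_self hB).smul (by norm_num)).add
      ((dotProductBilin ℝ ℝ (-(y ᵥ* X))).convexOn convex_univ)).add_const _).comp_linearMap
      (LinearMap.fst ℝ _ _) |>.subset (subset_univ S) hSconv
  have hcoord : ∀ k, ConvexOn ℝ S fun q => haloCoordTerm ν ξ (q.1 k, q.2 k) := fun k =>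
    convexOn_haloCoordTerm_apply hν hξ.le hSconv k fun q hq =>
      ⟨(hS q hq k).2.1.ne', (hS q hq k).2.2⟩
  exact (hquad.add (convexOn_sum hSconv fun k _ => hcoord k)).congr fun q _ =>
    (halo_loss_eq_quadratic_add_sum X ν ξ y q.1 q.2).symm

/-- Theorem 1 (convexity of the HALO-penalized linear-model loss): if
`XᵀX ⪰ ν·I` with `ν > 0` and `S` is an open convex region on which all entries
of `w` and `λ` are positive and `2ξ ≤ 3ν w_k λ_k²` for every `k`, then
`f(w, λ) = ½‖y − Xw‖² + ξ Σ_k w_k/λ_k²` is convex on `S`. -/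
theorem halo_loss_convexOn
    {n p : ℕ} (X : Matrix (Fin n) (Fin p) ℝ) (ν : ℝ) (hν : 0 < ν)
    (hX : ∀ x : Fin p → ℝ, ν * (x ⬝ᵥ x) ≤ x ⬝ᵥ ((Xᵀ * X) *ᵥ x))
    (y : Fin n → ℝ) (ξ : ℝ) (hξ : 0 < ξ)
    (S : Set ((Fin p → ℝ) × (Fin p → ℝ)))
    (hSopen : IsOpen S) (hSconv : Convex ℝ S)
    (hS : ∀ q ∈ S, ∀ k,
      0 < q.1 k ∧ 0 < q.2 k ∧ 2 * ξ ≤ 3 * ν * q.1 k * (q.2 k) ^ 2) :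
    ConvexOn ℝ S (fun q : (Fin p → ℝ) × (Fin p → ℝ) =>
      (1 / 2) * ((y - X *ᵥ q.1) ⬝ᵥ (y - X *ᵥ q.1)) +
        ξ * ∑ k, q.1 k / (q.2 k) ^ 2) :=
  halo_loss_convexOn_general X ν hν hX y ξ hξ S hSconv hS
end
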